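/- Let p(t,x) = (1/(2π)) ∫_{−π}^{π} e^{−2t(1−cos θ)} cos(xθ) dθ for t > 0 and x ∈ ℤ (the fundamental solution of the discrete heat equation on ℤ). Then for every α ∈ (0, 1/2] there exists a constant C > 0 such that: (i) p(t,x) ≤ C·t^{−1/2} for all t > 0 and x ∈ ℤ; (ii) |p(t,x) − p(t,y)| ≤ C·|x−y|^{2α}·t^{−1/2−α} for all t > 0 and x, y ∈ ℤ; (iii) |p(t+h,x) − p(t,x)| ≤ C·h^{2α}·t^{−1/2−2α} for all t > 0, h > 0 and x ∈ ℤ. -/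

import Mathlib

open Real MeasureTheory Set Filter

/-- The fundamental solution of the discrete heat equation on `ℤ`:
`p(t,x) = (1/(2π)) ∫_{-π}^{π} e^{-2t(1-cos θ)} cos(xθ) dθ`. -/
noncomputable def discHeat (t : ℝ) (x : ℤ) : ℝ :=
  (1 / (2 * Real.pi)) *
    ∫ θ in (-Real.pi)..Real.pi, Real.exp (-2 * t * (1 - Real.cos θ)) * Real.cos (x * θ)

/-!
On `[-π, π]` we have `2θ²/π² ≤ 1 - cos θ ≤ θ²/2`. The lower bound dominates the weight
`e^{-2t(1-cos θ)}` by the Gaussian `e^{-4tθ²/π²}`, whose moments give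
`∫_{-π}^{π} |θ|^β e^{-2t(1-cos θ)} dθ ≲ t^{-(β+1)/2}` for `0 ≤ β ≤ 2`. Each estimate bounds the
integrand of a difference by such a moment: in space `|cos(xθ) - cos(yθ)| ≤ min(2, |x-y||θ|)
≲ (|x-y||θ|)^γ`, in time `1 - e^{-2h(1-cos θ)} ≤ min(1, hθ²) ≤ (hθ²)^γ` by the upper bound.
-/

namespace Real

lemma min_le_rpow_mul_rpow {a w γ : ℝ} (ha : 0 ≤ a) (hw : 0 ≤ w) (hγ₀ : 0 ≤ γ) (hγ₁ : γ ≤ 1) :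
    min a w ≤ a ^ (1 - γ) * w ^ γ := by
  have hm : 0 ≤ min a w := le_min ha hw
  calc min a w = min a w ^ (1 - γ) * min a w ^ γ := by
        rw [← rpow_add' hm (by norm_num), sub_add_cancel, rpow_one]
    _ ≤ a ^ (1 - γ) * w ^ γ := by
        gcongr
        · exact min_le_left a w
        · exact min_le_right a w

lemma abs_cos_sub_cos_le_rpow {γ : ℝ} (hγ₀ : 0 ≤ γ) (hγ₁ : γ ≤ 1) (a b : ℝ) :
    |cos a - cos b| ≤ 2 ^ (1 - γ) * |a - b| ^ γ := by
  have h2 : |cos a - cos b| ≤ 2 := (abs_sub _ _).trans <| by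
    linarith [abs_cos_le_one a, abs_cos_le_one b]
  exact (le_min h2 (abs_cos_sub_cos_le a b)).trans
    (min_le_rpow_mul_rpow zero_le_two (abs_nonneg _) hγ₀ hγ₁)

lemma one_sub_exp_neg_le_rpow {u γ : ℝ} (hu : 0 ≤ u) (hγ₀ : 0 ≤ γ) (hγ₁ : γ ≤ 1) :
    1 - exp (-u) ≤ u ^ γ := by
  have h : 1 - exp (-u) ≤ min 1 u :=
    le_min (by linarith [exp_pos (-u)]) (by linarith [add_one_le_exp (-u)])
  simpa using h.trans (min_le_rpow_mul_rpow zero_le_one hu hγ₀ hγ₁)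

lemma sq_rpow_eq_abs_rpow (θ γ : ℝ) : (θ ^ 2) ^ γ = |θ| ^ (2 * γ) := by
  rw [← sq_abs, rpow_mul (abs_nonneg θ)]
  norm_cast

lemma rpow_mul_exp_neg_half_le_two {s γ : ℝ} (hs : 0 ≤ s) (hγ₀ : 0 ≤ γ) (hγ₁ : γ ≤ 1) :
    s ^ γ * exp (-(s / 2)) ≤ 2 := by
  have hpow : s ^ γ ≤ 1 + s := by
    rcases le_total s 1 with h | h
    · linarith [rpow_le_one hs h hγ₀]
    · calc s ^ γ ≤ s ^ (1 : ℝ) := rpow_le_rpow_of_exponent_le h hγ₁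
        _ ≤ 1 + s := by rw [rpow_one]; linarith
  have hexp : 1 + s ≤ 2 * exp (s / 2) := by linarith [add_one_le_exp (s / 2)]
  rw [exp_neg, ← div_eq_mul_inv, div_le_iff₀ (exp_pos _)]
  exact hpow.trans hexp

lemma abs_rpow_mul_exp_neg_mul_sq_le {b β : ℝ} (hb : 0 < b) (hβ₀ : 0 ≤ β) (hβ₂ : β ≤ 2)
    (θ : ℝ) : |θ| ^ β * exp (-(b * θ ^ 2)) ≤ 2 * b ^ (-β / 2) * exp (-(b / 2) * θ ^ 2) := by
  have hs : 0 ≤ b * θ ^ 2 := by positivity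
  have habs : |θ| ^ β = (b * θ ^ 2) ^ (β / 2) * b ^ (-β / 2) := by
    rw [mul_rpow hb.le (sq_nonneg θ), sq_rpow_eq_abs_rpow, mul_right_comm, ← rpow_add hb]
    ring_nf
    simp
  have hexp : exp (-(b * θ ^ 2)) = exp (-(b * θ ^ 2 / 2)) * exp (-(b / 2) * θ ^ 2) := by
    rw [← exp_add]; ring_nf
  calc |θ| ^ β * exp (-(b * θ ^ 2))
      = ((b * θ ^ 2) ^ (β / 2) * exp (-(b * θ ^ 2 / 2))) *
          (b ^ (-β / 2) * exp (-(b / 2) * θ ^ 2)) := by rw [habs, hexp]; ring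
    _ ≤ 2 * (b ^ (-β / 2) * exp (-(b / 2) * θ ^ 2)) := by
        gcongr
        exact rpow_mul_exp_neg_half_le_two hs (by linarith) (by linarith)
    _ = 2 * b ^ (-β / 2) * exp (-(b / 2) * θ ^ 2) := by ring

lemma intervalIntegral_abs_rpow_mul_exp_neg_mul_sq_le {b β l u : ℝ} (hb : 0 < b) (hβ₀ : 0 ≤ β)
    (hβ₂ : β ≤ 2) (hlu : l ≤ u) :
    ∫ θ in l..u, |θ| ^ β * exp (-(b * θ ^ 2)) ≤ 2 * √(2 * π) * b ^ (-(β + 1) / 2) := by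
  have hgauss : Integrable fun θ : ℝ => 2 * b ^ (-β / 2) * exp (-(b / 2) * θ ^ 2) :=
    (integrable_exp_neg_mul_sq (half_pos hb)).const_mul _
  have hgauss_integral : ∫ θ : ℝ, 2 * b ^ (-β / 2) * exp (-(b / 2) * θ ^ 2)
      = 2 * √(2 * π) * b ^ (-(β + 1) / 2) := by
    rw [integral_const_mul, integral_gaussian, show π / (b / 2) = 2 * π * b⁻¹ by field_simp,
      sqrt_mul (by positivity), sqrt_inv, sqrt_eq_rpow b, ← rpow_neg hb.le,
      show -(β + 1) / 2 = -β / 2 + -(1 / 2) by ring, rpow_add hb]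
    ring
  calc ∫ θ in l..u, |θ| ^ β * exp (-(b * θ ^ 2))
      ≤ ∫ θ in l..u, 2 * b ^ (-β / 2) * exp (-(b / 2) * θ ^ 2) := by
        refine intervalIntegral.integral_mono_on hlu
          (Continuous.intervalIntegrable (by fun_prop) _ _) hgauss.intervalIntegrable
          fun θ _ => abs_rpow_mul_exp_neg_mul_sq_le hb hβ₀ hβ₂ θ
    _ ≤ ∫ θ : ℝ, 2 * b ^ (-β / 2) * exp (-(b / 2) * θ ^ 2) := by
        rw [intervalIntegral.integral_of_le hlu]
        exact setIntegral_le_integral hgauss (.of_forall fun θ => by positivity)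
    _ = 2 * √(2 * π) * b ^ (-(β + 1) / 2) := hgauss_integral

lemma abs_exp_neg_add_sub_exp_neg_le {a b γ : ℝ} (hb : 0 ≤ b) (hγ₀ : 0 ≤ γ) (hγ₁ : γ ≤ 1) :
    |exp (-(a + b)) - exp (-a)| ≤ b ^ γ * exp (-a) := by
  have hsplit : exp (-(a + b)) - exp (-a) = -(exp (-a) * (1 - exp (-b))) := by
    rw [neg_add, exp_add]; ring
  have hnonneg : 0 ≤ 1 - exp (-b) := by linarith [exp_le_one_iff.mpr (neg_nonpos.mpr hb)]
  rw [hsplit, abs_neg, abs_of_nonneg (mul_nonneg (exp_pos _).le hnonneg), mul_comm]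
  gcongr
  exact one_sub_exp_neg_le_rpow hb hγ₀ hγ₁

end Real

noncomputable def heatMoment (β t : ℝ) : ℝ :=
  ∫ θ in (-π)..π, |θ| ^ β * exp (-2 * t * (1 - cos θ))

lemma exists_heatMoment_le {β : ℝ} (hβ₀ : 0 ≤ β) (hβ₂ : β ≤ 2) :
    ∃ K > 0, ∀ t > 0, heatMoment β t ≤ K * t ^ (-(β + 1) / 2) := by
  refine ⟨2 * √(2 * π) * (4 / π ^ 2) ^ (-(β + 1) / 2), by positivity, fun t ht => ?_⟩
  have hπ : -π ≤ π := by linarith [pi_pos]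
  calc heatMoment β t
      ≤ ∫ θ in (-π)..π, |θ| ^ β * exp (-(4 / π ^ 2 * t * θ ^ 2)) := by
        refine intervalIntegral.integral_mono_on hπ
          (Continuous.intervalIntegrable (by fun_prop) _ _)
          (Continuous.intervalIntegrable (by fun_prop) _ _) fun θ hθ => ?_
        have hcos := cos_le_one_sub_mul_cos_sq (abs_le.mpr hθ)
        gcongr
        linear_combination 2 * t * hcos
    _ ≤ 2 * √(2 * π) * (4 / π ^ 2 * t) ^ (-(β + 1) / 2) :=
        intervalIntegral_abs_rpow_mul_exp_neg_mul_sq_le (by positivity) hβ₀ hβ₂ hπ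
    _ = 2 * √(2 * π) * (4 / π ^ 2) ^ (-(β + 1) / 2) * t ^ (-(β + 1) / 2) := by
        rw [mul_rpow (by positivity) ht.le]; ring

lemma discHeat_le_heatMoment (t : ℝ) (x : ℤ) : discHeat t x ≤ 1 / (2 * π) * heatMoment 0 t := by
  have hπ : -π ≤ π := by linarith [pi_pos]
  unfold discHeat heatMoment
  simp only [rpow_zero, one_mul]
  gcongr
  exact intervalIntegral.integral_mono_on hπ (Continuous.intervalIntegrable (by fun_prop) _ _)
    (Continuous.intervalIntegrable (by fun_prop) _ _)
    fun θ _ => mul_le_of_le_one_right (exp_pos _).le (cos_le_one _)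

lemma abs_discHeat_sub_discHeat_le {t s r c β : ℝ} {x y : ℤ} (hβ : 0 ≤ β)
    (hbound : ∀ θ ∈ Icc (-π) π,
      |exp (-2 * t * (1 - cos θ)) * cos (x * θ) - exp (-2 * s * (1 - cos θ)) * cos (y * θ)|
        ≤ c * (|θ| ^ β * exp (-2 * r * (1 - cos θ)))) :
    |discHeat t x - discHeat s y| ≤ 1 / (2 * π) * c * heatMoment β r := by
  have hπ : -π ≤ π := by linarith [pi_pos]
  have hsub : discHeat t x - discHeat s y = 1 / (2 * π) * ∫ θ in (-π)..π,
      (exp (-2 * t * (1 - cos θ)) * cos (x * θ) - exp (-2 * s * (1 - cos θ)) * cos (y * θ)) := by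
    rw [intervalIntegral.integral_sub (Continuous.intervalIntegrable (by fun_prop) _ _)
      (Continuous.intervalIntegrable (by fun_prop) _ _), discHeat, discHeat, mul_sub]
  rw [hsub, abs_mul, abs_of_pos (by positivity), mul_assoc, heatMoment,
    ← intervalIntegral.integral_const_mul]
  gcongr
  refine (intervalIntegral.abs_integral_le_integral_abs hπ).trans <|
    intervalIntegral.integral_mono_on hπ (Continuous.intervalIntegrable (by fun_prop) _ _)
      (Continuous.intervalIntegrable (by fun_prop) _ _) hbound

theorem exists_discHeat_le : ∃ C > 0, ∀ t > 0, ∀ x : ℤ, discHeat t x ≤ C * t ^ (-(1 : ℝ) / 2) := by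
  obtain ⟨K, hK, hmoment⟩ := exists_heatMoment_le le_rfl zero_le_two
  refine ⟨1 / (2 * π) * K, by positivity, fun t ht x => ?_⟩
  calc discHeat t x ≤ 1 / (2 * π) * heatMoment 0 t := discHeat_le_heatMoment t x
    _ ≤ 1 / (2 * π) * (K * t ^ (-(0 + 1) / 2 : ℝ)) := by gcongr; exact hmoment t ht
    _ = 1 / (2 * π) * K * t ^ (-(1 : ℝ) / 2) := by norm_num [mul_assoc]

theorem exists_abs_discHeat_sub_discHeat_le {γ : ℝ} (hγ₀ : 0 ≤ γ) (hγ₁ : γ ≤ 1) :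
    ∃ C > 0, ∀ t > 0, ∀ x y : ℤ,
      |discHeat t x - discHeat t y| ≤ C * |(x : ℝ) - y| ^ γ * t ^ (-(γ + 1) / 2) := by
  obtain ⟨K, hK, hmoment⟩ := exists_heatMoment_le hγ₀ (by linarith)
  refine ⟨1 / (2 * π) * 2 ^ (1 - γ) * K, by positivity, fun t ht x y => ?_⟩
  have hbound : ∀ θ ∈ Icc (-π) π,
      |exp (-2 * t * (1 - cos θ)) * cos (x * θ) - exp (-2 * t * (1 - cos θ)) * cos (y * θ)|
        ≤ 2 ^ (1 - γ) * |(x : ℝ) - y| ^ γ * (|θ| ^ γ * exp (-2 * t * (1 - cos θ))) := by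
    intro θ _
    have hcos := abs_cos_sub_cos_le_rpow hγ₀ hγ₁ (x * θ) (y * θ)
    rw [← sub_mul, abs_mul, mul_rpow (abs_nonneg _) (abs_nonneg _)] at hcos
    rw [← mul_sub, abs_mul, abs_exp]
    calc exp (-2 * t * (1 - cos θ)) * |cos (x * θ) - cos (y * θ)|
        ≤ exp (-2 * t * (1 - cos θ)) * (2 ^ (1 - γ) * (|(x : ℝ) - y| ^ γ * |θ| ^ γ)) := by
          gcongr
      _ = _ := by ring
  calc |discHeat t x - discHeat t y|
      ≤ 1 / (2 * π) * (2 ^ (1 - γ) * |(x : ℝ) - y| ^ γ) * heatMoment γ t :=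
        abs_discHeat_sub_discHeat_le hγ₀ hbound
    _ ≤ 1 / (2 * π) * (2 ^ (1 - γ) * |(x : ℝ) - y| ^ γ) * (K * t ^ (-(γ + 1) / 2)) := by
        gcongr; exact hmoment t ht
    _ = _ := by ring

theorem exists_abs_discHeat_add_sub_discHeat_le {γ : ℝ} (hγ₀ : 0 ≤ γ) (hγ₁ : γ ≤ 1) :
    ∃ C > 0, ∀ t > 0, ∀ h ≥ 0, ∀ x : ℤ,
      |discHeat (t + h) x - discHeat t x| ≤ C * h ^ γ * t ^ (-(2 * γ + 1) / 2) := by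
  obtain ⟨K, hK, hmoment⟩ := exists_heatMoment_le (by linarith : 0 ≤ 2 * γ) (by linarith)
  refine ⟨1 / (2 * π) * K, by positivity, fun t ht h hh x => ?_⟩
  have hbound : ∀ θ ∈ Icc (-π) π,
      |exp (-2 * (t + h) * (1 - cos θ)) * cos (x * θ) - exp (-2 * t * (1 - cos θ)) * cos (x * θ)|
        ≤ h ^ γ * (|θ| ^ (2 * γ) * exp (-2 * t * (1 - cos θ))) := by
    intro θ _
    have hexponent : 2 * h * (1 - cos θ) ≤ h * θ ^ 2 := by
      linear_combination 2 * h * one_sub_sq_div_two_le_cos (x := θ)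
    have hincrement : 0 ≤ 2 * h * (1 - cos θ) := by nlinarith [cos_le_one θ]
    have hexp := abs_exp_neg_add_sub_exp_neg_le (a := 2 * t * (1 - cos θ)) hincrement hγ₀ hγ₁
    calc |exp (-2 * (t + h) * (1 - cos θ)) * cos (x * θ)
          - exp (-2 * t * (1 - cos θ)) * cos (x * θ)|
        = |exp (-(2 * t * (1 - cos θ) + 2 * h * (1 - cos θ))) - exp (-(2 * t * (1 - cos θ)))|
            * |cos (x * θ)| := by rw [← sub_mul, abs_mul]; ring_nf
      _ ≤ (2 * h * (1 - cos θ)) ^ γ * exp (-(2 * t * (1 - cos θ))) * 1 :=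
          mul_le_mul hexp (abs_cos_le_one _) (abs_nonneg _)
            (mul_nonneg (rpow_nonneg hincrement γ) (exp_pos _).le)
      _ ≤ (h * θ ^ 2) ^ γ * exp (-(2 * t * (1 - cos θ))) * 1 := by gcongr
      _ = h ^ γ * (|θ| ^ (2 * γ) * exp (-2 * t * (1 - cos θ))) := by
          rw [mul_rpow hh (sq_nonneg θ), sq_rpow_eq_abs_rpow]; ring_nf
  calc |discHeat (t + h) x - discHeat t x|
      ≤ 1 / (2 * π) * h ^ γ * heatMoment (2 * γ) t :=
        abs_discHeat_sub_discHeat_le (by linarith) hbound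
    _ ≤ 1 / (2 * π) * h ^ γ * (K * t ^ (-(2 * γ + 1) / 2)) := by
        gcongr; exact hmoment t ht
    _ = _ := by ring

theorem discrete_heat_kernel_estimates :
    ∀ α ∈ Set.Ioc (0:ℝ) (1/2), ∃ C > (0:ℝ),
      (∀ t > (0:ℝ), ∀ x : ℤ, discHeat t x ≤ C * t ^ (-(1:ℝ)/2)) ∧
      (∀ t > (0:ℝ), ∀ x y : ℤ,
        |discHeat t x - discHeat t y| ≤ C * |(x:ℝ) - (y:ℝ)| ^ (2 * α) * t ^ (-(1:ℝ)/2 - α)) ∧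
      (∀ t > (0:ℝ), ∀ h > (0:ℝ), ∀ x : ℤ,
        |discHeat (t + h) x - discHeat t x| ≤ C * h ^ (2 * α) * t ^ (-(1:ℝ)/2 - 2 * α)) := by
  rintro α ⟨hα₀, hα₁⟩
  obtain ⟨C₁, hC₁, hbound⟩ := exists_discHeat_le
  obtain ⟨C₂, hC₂, hspace⟩ := exists_abs_discHeat_sub_discHeat_le (γ := 2 * α) (by linarith)
    (by linarith)
  obtain ⟨C₃, hC₃, htime⟩ := exists_abs_discHeat_add_sub_discHeat_le (γ := 2 * α) (by linarith)
    (by linarith)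
  refine ⟨C₁ + C₂ + C₃, by positivity, fun t ht x => ?_, fun t ht x y => ?_,
    fun t ht h hh x => ?_⟩
  · exact (hbound t ht x).trans (by gcongr; linarith)
  · rw [show -(1 : ℝ) / 2 - α = -(2 * α + 1) / 2 by ring]
    exact (hspace t ht x y).trans (by gcongr; linarith)
  · rw [show -(1 : ℝ) / 2 - 2 * α = -(2 * (2 * α) + 1) / 2 by ring]
    exact (htime t ht h hh.le x).trans (by gcongr; linarith)
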